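/- arXiv:math/0207188 — 3 statements merged into one kernel-verified Lean document; each statement's English description precedes it below -/
import Mathlib

section
/- Let (H,f) be a symmetric bilinear lattice and c, c' two characteristic forms for f. If c' − c = 2·f̂(h) for some h ∈ H (i.e. c'(x) = c(x) + 2 f(h,x) for all x ∈ H), then the discriminant quadratic functions φ_{f,c} and φ_{f,c'} on H^♯/H are equal. -/
open scoped TensorProduct

noncomputable section

/-- ℚ/ℤ -/
abbrev QZ : Type := AddCircle (1 : ℚ)

section Lattice

variable {H : Type} [AddCommGroup H]

/-- canonical map H → ℚ ⊗ H -/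
def iotaQ (H : Type) [AddCommGroup H] : H →ₗ[ℤ] ℚ ⊗[ℤ] H :=
  TensorProduct.mk ℤ ℚ H 1

/-- the ℚ-bilinear extension of f to ℚ ⊗ H -/
def fQ (f : H →ₗ[ℤ] H →ₗ[ℤ] ℤ) : (ℚ ⊗[ℤ] H) →ₗ[ℚ] (ℚ ⊗[ℤ] H) →ₗ[ℚ] ℚ :=
  LinearMap.BilinForm.baseChange ℚ f

/-- the ℚ-linear extension of a linear form c : H → ℤ to ℚ ⊗ H -/
def cQ (c : H →ₗ[ℤ] ℤ) : (ℚ ⊗[ℤ] H) →ₗ[ℚ] ℚ :=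
  LinearMap.liftBaseChange ℚ ((Int.castAddHom ℚ).toIntLinearMap ∘ₗ c)

/-- the dual lattice H^♯ = {x ∈ ℚ⊗H : f_ℚ(x, H) ⊆ ℤ} -/
def dualLattice (f : H →ₗ[ℤ] H →ₗ[ℤ] ℤ) : AddSubgroup (ℚ ⊗[ℤ] H) where
  carrier := {x | ∀ h : H, ∃ n : ℤ, fQ f x (iotaQ H h) = (n : ℚ)}
  zero_mem' := fun h => ⟨0, by simp⟩
  add_mem' := by
    rintro x y hx hy h
    obtain ⟨n, hn⟩ := hx h
    obtain ⟨m, hm⟩ := hy h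
    exact ⟨n + m, by push_cast [map_add, LinearMap.add_apply, hn, hm]; ring⟩
  neg_mem' := by
    rintro x hx h
    obtain ⟨n, hn⟩ := hx h
    exact ⟨-n, by push_cast [map_neg, LinearMap.neg_apply, hn]; ring⟩

/-- the image of H, as a subgroup of the dual lattice -/
def latInDual (f : H →ₗ[ℤ] H →ₗ[ℤ] ℤ) : AddSubgroup (dualLattice f) :=
  ((iotaQ H).toAddMonoidHom.range).addSubgroupOf (dualLattice f)

/-- the discriminant group G_f = H^♯/H -/
def Gf (f : H →ₗ[ℤ] H →ₗ[ℤ] ℤ) : Type :=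
  dualLattice f ⧸ latInDual f

instance (f : H →ₗ[ℤ] H →ₗ[ℤ] ℤ) : AddCommGroup (Gf f) :=
  QuotientAddGroup.Quotient.addCommGroup _

/-- the discriminant quadratic function, on representatives:
φ_{f,c}(x) = (1/2)(f_ℚ(x,x) − c_ℚ(x)) mod 1 -/
def phiRep (f : H →ₗ[ℤ] H →ₗ[ℤ] ℤ) (c : H →ₗ[ℤ] ℤ) (x : dualLattice f) : QZ :=
  ((((1 : ℚ)/2) * (fQ f x x - cQ c x) : ℚ) : QZ)

/-- the (preimage in H^♯ of the) radical of L_f -/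
def radSub (f : H →ₗ[ℤ] H →ₗ[ℤ] ℤ) : AddSubgroup (dualLattice f) where
  carrier := {x | ∀ y : dualLattice f, ∃ n : ℤ, fQ f x y = (n : ℚ)}
  zero_mem' := fun y => ⟨0, by simp⟩
  add_mem' := by
    rintro x x' hx hx' y
    obtain ⟨n, hn⟩ := hx y
    obtain ⟨m, hm⟩ := hx' y
    exact ⟨n + m, by push_cast [AddSubgroup.coe_add, map_add, LinearMap.add_apply, hn, hm]; ring⟩
  neg_mem' := by
    rintro x hx y
    obtain ⟨n, hn⟩ := hx y
    exact ⟨-n, by push_cast [AddSubgroup.coe_neg, map_neg, LinearMap.neg_apply, hn]; ring⟩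

end Lattice

/-! For `x ∈ H^♯` the difference `c'_ℚ(x) - c_ℚ(x) = 2 f_ℚ(h₀, x)` is an even integer, since by
symmetry `f_ℚ(h₀, x) = f_ℚ(x, h₀) ∈ ℤ`; halving it changes `φ(x)` by an integer. -/

section DiscriminantForm

variable {H : Type} [AddCommGroup H]

@[simp]
lemma fQ_tmul (f : H →ₗ[ℤ] H →ₗ[ℤ] ℤ) (a b : ℚ) (m n : H) :
    fQ f (a ⊗ₜ m) (b ⊗ₜ n) = a * b * f m n := by
  simp [fQ, LinearMap.BilinForm.baseChange_tmul, mul_comm]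

@[simp]
lemma cQ_tmul (c : H →ₗ[ℤ] ℤ) (a : ℚ) (m : H) : cQ c (a ⊗ₜ m) = a * c m := by
  simp [cQ, LinearMap.liftBaseChange_tmul]

lemma fQ_comm {f : H →ₗ[ℤ] H →ₗ[ℤ] ℤ} (hf : ∀ x y, f x y = f y x) (x y : ℚ ⊗[ℤ] H) :
    fQ f x y = fQ f y x :=
  (LinearMap.BilinForm.IsSymm.baseChange ℚ ⟨hf⟩).eq x y

lemma cQ_add (c d : H →ₗ[ℤ] ℤ) : cQ (c + d) = cQ c + cQ d := by
  simp [cQ, LinearMap.comp_add]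

lemma cQ_zsmul (n : ℤ) (c : H →ₗ[ℤ] ℤ) : cQ (n • c) = n • cQ c := by
  ext; simp

lemma cQ_apply_left (f : H →ₗ[ℤ] H →ₗ[ℤ] ℤ) (h : H) : cQ (f h) = fQ f (iotaQ H h) := by
  ext x
  change _ = fQ f (1 ⊗ₜ h) (1 ⊗ₜ x)
  simp

lemma exists_fQ_iotaQ_eq_intCast {f : H →ₗ[ℤ] H →ₗ[ℤ] ℤ} (hf : ∀ x y, f x y = f y x)
    (x : dualLattice f) (h : H) : ∃ n : ℤ, fQ f (iotaQ H h) x = n := by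
  simpa only [fQ_comm hf (iotaQ H h)] using x.2 h

lemma phiRep_eq_of_cQ_eq_add_two_mul (f : H →ₗ[ℤ] H →ₗ[ℤ] ℤ) {c c' : H →ₗ[ℤ] ℤ}
    {x : dualLattice f} {n : ℤ} (h : cQ c' x = cQ c x + 2 * n) :
    phiRep f c x = phiRep f c' x := by
  have : 1 / 2 * (fQ f x x - cQ c' x) = 1 / 2 * (fQ f x x - cQ c x) + (-n) • (1 : ℚ) := by
    rw [h, zsmul_eq_mul]; push_cast; ring
  rw [phiRep, phiRep, this, AddCircle.coe_add, AddCircle.coe_zsmul, AddCircle.coe_period,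
    smul_zero, add_zero]

end DiscriminantForm

theorem stmt10_general {H : Type} [AddCommGroup H]
    (f : H →ₗ[ℤ] H →ₗ[ℤ] ℤ) (hf : ∀ x y, f x y = f y x)
    (c c' : H →ₗ[ℤ] ℤ)
    (hcc' : ∃ h0 : H, ∀ x : H, c' x = c x + 2 * f h0 x) :
    ∀ x : dualLattice f, phiRep f c x = phiRep f c' x := by
  obtain ⟨h0, hh⟩ := hcc'
  intro x
  obtain ⟨n, hn⟩ := exists_fQ_iotaQ_eq_intCast hf x h0
  have hc'_eq : c' = c + (2 : ℤ) • f h0 := LinearMap.ext hh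
  refine phiRep_eq_of_cQ_eq_add_two_mul f (n := n) ?_
  rw [hc'_eq, cQ_add, cQ_zsmul, cQ_apply_left, LinearMap.add_apply, LinearMap.smul_apply, hn,
    zsmul_eq_mul, Int.cast_ofNat]

theorem stmt10 {H : Type} [AddCommGroup H] [Module.Free ℤ H] [Module.Finite ℤ H]
    (f : H →ₗ[ℤ] H →ₗ[ℤ] ℤ) (hf : ∀ x y, f x y = f y x)
    (c c' : H →ₗ[ℤ] ℤ) (hc : ∀ h : H, (2 : ℤ) ∣ f h h - c h)
    (hc' : ∀ h : H, (2 : ℤ) ∣ f h h - c' h)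
    (hcc' : ∃ h0 : H, ∀ x : H, c' x = c x + 2 * f h0 x) :
    ∀ x : dualLattice f, phiRep f c x = phiRep f c' x :=
  stmt10_general f hf c c' hcc'
end
end

section
/- Let (H,f) be a symmetric bilinear lattice. There is a short exact sequence 0 → Ker L̂_f → G_f → Tors(Coker f̂) → 0, where the map G_f → Tors(Coker f̂) is induced by restricting the adjoint of f_ℚ to H^♯, and this sequence splits. -/
open scoped TensorProduct

noncomputable section

/-!
For `x ∈ H^♯` the form `f_ℚ(x, ·)|_H` is integral and `n • x ∈ H` for some `n ≠ 0`, so its class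
modulo `f̂(H)` is torsion; conversely, if `n • m = f̂ h` then `h / n ∈ H^♯` realizes `m`. Hence
`G_f` maps onto `Tors(Coker f̂)`. A class lies in the kernel iff `f_ℚ(x, ·)|_H = f̂ h` for some
`h ∈ H`; by symmetry such `x` pair integrally with all of `H^♯`. Conversely, for `x` in the
radical the form `m ↦ m_ℚ(x)` is integral on the saturation of `f̂(H)`, a direct summand of
`Hom(H, ℤ)`, so it extends to an integral form on `Hom(H, ℤ)`, which by reflexivity is evaluation
at some `h` with `f̂ h = f_ℚ(x, ·)|_H`. Finally the kernel is divisible (`x - h` is orthogonal to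
`H`, so it can be divided by any `n ≠ 0` inside `H^♯`), hence injective, and the sequence splits.
-/

theorem LinearMap.exists_comp_ker_subtype_eq {R M N P : Type*} [Ring R] [AddCommGroup M]
    [AddCommGroup N] [AddCommGroup P] [Module R M] [Module R N] [Module R P]
    [Module.Projective R P] (π : M →ₗ[R] P) (hπ : Function.Surjective π)
    (θ : LinearMap.ker π →ₗ[R] N) : ∃ ξ : M →ₗ[R] N, ξ ∘ₗ (LinearMap.ker π).subtype = θ := by
  have hsplit := ((LinearMap.exact_subtype_ker_map π).split_tfae
    (LinearMap.ker π).injective_subtype hπ).out 0 1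
  obtain ⟨ρ, hρ⟩ :=
    hsplit.mp (π.exists_rightInverse_of_surjective (LinearMap.range_eq_top.mpr hπ))
  exact ⟨θ ∘ₗ ρ, by rw [LinearMap.comp_assoc, hρ, LinearMap.comp_id]⟩

theorem AddMonoidHom.exists_rightInverse_of_divisible_ker {G T : Type*} [AddCommGroup G]
    [AddCommGroup T] (τ : G →+ T) (hτ : Function.Surjective τ)
    (hdiv : ∀ g, τ g = 0 → ∀ n : ℤ, n ≠ 0 → ∃ g', τ g' = 0 ∧ n • g' = g) :
    ∃ s : T →+ G, ∀ t, τ (s t) = t := by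
  let K := LinearMap.ker τ.toIntLinearMap
  let _ : DivisibleBy K ℤ := divisibleByOfSMulRightSurj K ℤ fun {n} hn k => by
    obtain ⟨g', hg', hng'⟩ := hdiv k k.2 n hn
    exact ⟨⟨g', hg'⟩, Subtype.ext hng'⟩
  obtain ⟨ρ, hρ⟩ := (Module.Baer.of_divisible K).extension_property K.subtype
    K.injective_subtype LinearMap.id
  have hsplit := ((LinearMap.exact_subtype_ker_map τ.toIntLinearMap).split_tfae
    K.injective_subtype hτ).out 0 1
  obtain ⟨s, hs⟩ := hsplit.mpr ⟨ρ, hρ⟩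
  exact ⟨s.toAddMonoidHom, LinearMap.congr_fun hs⟩

def LinearMap.intLift {M : Type*} [AddCommGroup M] (φ : M →ₗ[ℤ] ℚ)
    (hφ : ∀ m, ∃ n : ℤ, φ m = n) : M →ₗ[ℤ] ℤ :=
  AddMonoidHom.toIntLinearMap
    { toFun m := (hφ m).choose
      map_zero' := Int.cast_injective (α := ℚ) <| by rw [← (hφ 0).choose_spec]; simp
      map_add' a b := Int.cast_injective (α := ℚ) <| by
        push_cast
        rw [← (hφ _).choose_spec, ← (hφ _).choose_spec, ← (hφ _).choose_spec, map_add] }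

@[simp]
lemma LinearMap.intCast_intLift_apply {M : Type*} [AddCommGroup M] (φ : M →ₗ[ℤ] ℚ)
    (hφ : ∀ m, ∃ n : ℤ, φ m = n) (m : M) : ((φ.intLift hφ m : ℤ) : ℚ) = φ m :=
  (hφ m).choose_spec.symm

section Rational

variable {H : Type} [AddCommGroup H]

lemma iotaQ_apply (h : H) : iotaQ H h = (1 : ℚ) ⊗ₜ[ℤ] h := rfl

lemma exists_intCast_smul_eq_iotaQ (x : ℚ ⊗[ℤ] H) :
    ∃ n : ℤ, n ≠ 0 ∧ ∃ h : H, (n : ℚ) • x = iotaQ H h := by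
  obtain ⟨⟨h, n⟩, hn⟩ := IsLocalizedModule.surj (nonZeroDivisors ℤ) (TensorProduct.mk ℤ ℚ H 1) x
  exact ⟨n, nonZeroDivisors.coe_ne_zero n, h, by rw [Int.cast_smul_eq_zsmul]; exact hn⟩

lemma linearMap_ext_iotaQ {M : Type*} [AddCommGroup M] [Module ℚ M]
    {φ φ' : ℚ ⊗[ℤ] H →ₗ[ℚ] M} (h : ∀ k, φ (iotaQ H k) = φ' (iotaQ H k)) : φ = φ' :=
  (TensorProduct.isBaseChange ℤ H ℚ).algHom_ext _ _ h

@[simp]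
lemma fQ_iotaQ_iotaQ (f : H →ₗ[ℤ] H →ₗ[ℤ] ℤ) (h k : H) :
    fQ f (iotaQ H h) (iotaQ H k) = f h k := by
  simp [fQ, iotaQ_apply, LinearMap.BilinForm.baseChange_tmul, Algebra.smul_def]

@[simp]
lemma cQ_iotaQ (c : H →ₗ[ℤ] ℤ) (h : H) : cQ c (iotaQ H h) = c h := by
  simp [cQ, iotaQ_apply]

def cQEval (x : ℚ ⊗[ℤ] H) : (H →ₗ[ℤ] ℤ) →ₗ[ℤ] ℚ :=
  AddMonoidHom.toIntLinearMap
    { toFun c := cQ c x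
      map_zero' := by
        rw [show cQ (0 : H →ₗ[ℤ] ℤ) = 0 from linearMap_ext_iotaQ fun k => by simp]; rfl
      map_add' c c' := by
        rw [show cQ (c + c') = cQ c + cQ c' from linearMap_ext_iotaQ fun k => by simp]; rfl }

@[simp]
lemma cQEval_apply (x : ℚ ⊗[ℤ] H) (c : H →ₗ[ℤ] ℤ) : cQEval x c = cQ c x := rfl

end Rational

section DualLattice

variable {H : Type} [AddCommGroup H] (f : H →ₗ[ℤ] H →ₗ[ℤ] ℤ)

def fQRestrict (x : ℚ ⊗[ℤ] H) : H →ₗ[ℤ] ℚ :=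
  (fQ f x).restrictScalars ℤ ∘ₗ iotaQ H

@[simp]
lemma fQRestrict_apply (x : ℚ ⊗[ℤ] H) (k : H) : fQRestrict f x k = fQ f x (iotaQ H k) :=
  rfl

lemma mem_dualLattice_iff {x : ℚ ⊗[ℤ] H} :
    x ∈ dualLattice f ↔ ∀ k, ∃ n : ℤ, fQRestrict f x k = n :=
  Iff.rfl

lemma mem_dualLattice_of_fQ_eq {x : ℚ ⊗[ℤ] H} (d : H →ₗ[ℤ] ℤ)
    (hx : ∀ k, fQ f x (iotaQ H k) = d k) : x ∈ dualLattice f :=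
  fun k => ⟨d k, hx k⟩

lemma iotaQ_mem_dualLattice (h : H) : iotaQ H h ∈ dualLattice f :=
  mem_dualLattice_of_fQ_eq f (f h) (fQ_iotaQ_iotaQ f h)

lemma mem_latInDual_iff {x : dualLattice f} :
    x ∈ latInDual f ↔ ∃ h, iotaQ H h = (x : ℚ ⊗[ℤ] H) :=
  AddSubgroup.mem_addSubgroupOf

def dualPairing : dualLattice f →+ (H →ₗ[ℤ] ℤ) where
  toFun x := (fQRestrict f x).intLift ((mem_dualLattice_iff f).mp x.2)
  map_zero' := by ext; exact Int.cast_injective (α := ℚ) (by simp)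
  map_add' x y := by ext; exact Int.cast_injective (α := ℚ) (by simp)

@[simp]
lemma intCast_dualPairing_apply (x : dualLattice f) (h : H) :
    ((dualPairing f x h : ℤ) : ℚ) = fQ f x (iotaQ H h) :=
  LinearMap.intCast_intLift_apply _ _ h

lemma dualPairing_eq_iff {x : dualLattice f} {d : H →ₗ[ℤ] ℤ} :
    dualPairing f x = d ↔ ∀ k, fQ f x (iotaQ H k) = d k := by
  simp only [LinearMap.ext_iff, ← intCast_dualPairing_apply, Int.cast_inj]

lemma dualPairing_iotaQ (h : H) : dualPairing f ⟨iotaQ H h, iotaQ_mem_dualLattice f h⟩ = f h :=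
  (dualPairing_eq_iff f).mpr (fQ_iotaQ_iotaQ f h)

lemma cQ_dualPairing (x : dualLattice f) : cQ (dualPairing f x) = fQ f x :=
  linearMap_ext_iotaQ fun k => by simp

lemma fQ_eq_of_dualPairing_eq {x y : dualLattice f} (hxy : dualPairing f x = dualPairing f y) :
    fQ f x = fQ f y := by
  rw [← cQ_dualPairing, hxy, cQ_dualPairing]

def gfToCoker : Gf f →+ (H →ₗ[ℤ] ℤ) ⧸ LinearMap.range f :=
  QuotientAddGroup.lift (latInDual f)
    ((LinearMap.range f).mkQ.toAddMonoidHom.comp (dualPairing f)) fun x hx => by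
      obtain ⟨h, hh⟩ := (mem_latInDual_iff f).mp hx
      obtain rfl : ⟨iotaQ H h, iotaQ_mem_dualLattice f h⟩ = x := Subtype.ext hh
      simp [dualPairing_iotaQ]

lemma gfToCoker_mk (x : dualLattice f) :
    gfToCoker f (QuotientAddGroup.mk x) = Submodule.Quotient.mk (dualPairing f x) :=
  rfl

lemma gfToCoker_mk_eq_zero_iff (x : dualLattice f) :
    gfToCoker f (QuotientAddGroup.mk x) = 0 ↔ ∃ h, f h = dualPairing f x := by
  rw [gfToCoker_mk, Submodule.Quotient.mk_eq_zero, LinearMap.mem_range]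

end DualLattice

section Torsion

variable {H : Type} [AddCommGroup H] (f : H →ₗ[ℤ] H →ₗ[ℤ] ℤ)

lemma fQ_inv_smul_iotaQ {n : ℤ} (hn : n ≠ 0) {m : H →ₗ[ℤ] ℤ} {h : H} (hm : n • m = f h)
    (k : H) : fQ f ((n : ℚ)⁻¹ • iotaQ H h) (iotaQ H k) = m k := by
  have hk : f h k = n * m k := by rw [← hm]; rfl
  rw [map_smul, LinearMap.smul_apply, fQ_iotaQ_iotaQ, hk, smul_eq_mul]
  push_cast
  field_simp

lemma exists_dualPairing_eq_iff (m : H →ₗ[ℤ] ℤ) :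
    (∃ x, dualPairing f x = m) ↔
      Submodule.Quotient.mk (p := LinearMap.range f) m ∈
        Submodule.torsion ℤ ((H →ₗ[ℤ] ℤ) ⧸ LinearMap.range f) := by
  rw [Submodule.mem_torsion_iff]
  constructor
  · rintro ⟨x, rfl⟩
    obtain ⟨n, hn, h, hnx⟩ := exists_intCast_smul_eq_iotaQ (x : ℚ ⊗[ℤ] H)
    refine ⟨⟨n, mem_nonZeroDivisors_of_ne_zero hn⟩, ?_⟩
    have hnm : n • dualPairing f x = f h := by
      rw [← map_zsmul, dualPairing_eq_iff]
      intro k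
      rw [AddSubgroup.coe_zsmul, ← Int.cast_smul_eq_zsmul ℚ, hnx, fQ_iotaQ_iotaQ]
    rw [Submonoid.mk_smul, ← Submodule.Quotient.mk_smul, hnm, Submodule.Quotient.mk_eq_zero]
    exact LinearMap.mem_range_self f h
  · rintro ⟨⟨n, hn⟩, hnm⟩
    rw [Submonoid.mk_smul, ← Submodule.Quotient.mk_smul, Submodule.Quotient.mk_eq_zero] at hnm
    obtain ⟨h, hh⟩ := hnm
    have hn : n ≠ 0 := nonZeroDivisors.ne_zero hn
    have hx := fQ_inv_smul_iotaQ f hn hh.symm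
    exact ⟨⟨_, mem_dualLattice_of_fQ_eq f m hx⟩, (dualPairing_eq_iff f).mpr hx⟩

lemma gfToCoker_mem_torsion (g : Gf f) :
    gfToCoker f g ∈ Submodule.torsion ℤ ((H →ₗ[ℤ] ℤ) ⧸ LinearMap.range f) := by
  induction g using QuotientAddGroup.induction_on with
  | H x => exact (exists_dualPairing_eq_iff f _).mp ⟨x, rfl⟩

lemma exists_gfToCoker_eq_of_mem_torsion {t : (H →ₗ[ℤ] ℤ) ⧸ LinearMap.range f}
    (ht : t ∈ Submodule.torsion ℤ ((H →ₗ[ℤ] ℤ) ⧸ LinearMap.range f)) :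
    ∃ g, gfToCoker f g = t := by
  obtain ⟨m, rfl⟩ := Submodule.Quotient.mk_surjective _ t
  obtain ⟨x, rfl⟩ := (exists_dualPairing_eq_iff f m).mpr ht
  exact ⟨QuotientAddGroup.mk x, rfl⟩

end Torsion

section Radical

variable {H : Type} [AddCommGroup H] {f : H →ₗ[ℤ] H →ₗ[ℤ] ℤ}

lemma mem_radSub_of_dualPairing_eq (hf : ∀ x y, f x y = f y x) {x : dualLattice f} {h : H}
    (hx : f h = dualPairing f x) : x ∈ radSub f := by
  intro y
  obtain ⟨n, hn⟩ := (mem_dualLattice_iff f).mp y.2 h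
  refine ⟨n, ?_⟩
  rw [fQ_eq_of_dualPairing_eq f (x := x) (y := ⟨_, iotaQ_mem_dualLattice f h⟩)
    (by rw [dualPairing_iotaQ, hx]), fQ_comm hf]
  exact hn

lemma exists_dualPairing_eq_of_mem_radSub [Module.Free ℤ H] [Module.Finite ℤ H]
    (hf : ∀ x y, f x y = f y x) {x : dualLattice f} (hx : x ∈ radSub f) :
    ∃ h, f h = dualPairing f x := by
  let π := (Submodule.torsion ℤ ((H →ₗ[ℤ] ℤ) ⧸ LinearMap.range f)).mkQ ∘ₗ
    (LinearMap.range f).mkQ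
  have hπ : Function.Surjective π :=
    (Submodule.mkQ_surjective _).comp (Submodule.mkQ_surjective _)
  have mem_ker_π (m) : m ∈ LinearMap.ker π ↔ ∃ y, dualPairing f y = m := by
    rw [exists_dualPairing_eq_iff, LinearMap.mem_ker, LinearMap.comp_apply,
      Submodule.mkQ_apply, Submodule.mkQ_apply, Submodule.Quotient.mk_eq_zero]
  -- `ker π`, the saturation of `f̂(H)`, consists of the forms `f_ℚ(y, ·)|_H` with `y ∈ H^♯`;
  -- on it `m ↦ m_ℚ(x)` is integral because `x` lies in the radical.
  have hint (m : LinearMap.ker π) :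
      ∃ n : ℤ, (cQEval (x : ℚ ⊗[ℤ] H) ∘ₗ (LinearMap.ker π).subtype) m = n := by
    obtain ⟨y, hy⟩ := (mem_ker_π m).mp m.2
    obtain ⟨n, hn⟩ := hx y
    refine ⟨n, ?_⟩
    rw [LinearMap.comp_apply, Submodule.subtype_apply, cQEval_apply, ← hy, cQ_dualPairing,
      fQ_comm hf, hn]
  obtain ⟨ξ, hξ⟩ := π.exists_comp_ker_subtype_eq hπ (LinearMap.intLift _ hint)
  refine ⟨(Module.evalEquiv ℤ H).symm ξ, LinearMap.ext fun k => Int.cast_injective (α := ℚ) ?_⟩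
  have hfk : f k ∈ LinearMap.ker π := (mem_ker_π _).mpr ⟨_, dualPairing_iotaQ f k⟩
  calc ((f ((Module.evalEquiv ℤ H).symm ξ) k : ℤ) : ℚ)
      = ξ (f k) := by rw [hf, Module.apply_evalEquiv_symm_apply]
    _ = cQ (f k) x := by
      have hξk : ξ (f k) = LinearMap.intLift _ hint ⟨f k, hfk⟩ :=
        LinearMap.congr_fun hξ ⟨f k, hfk⟩
      rw [hξk, LinearMap.intCast_intLift_apply]
      rfl
    _ = fQ f x (iotaQ H k) := by
      rw [← dualPairing_iotaQ f k, cQ_dualPairing, fQ_comm hf]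
    _ = dualPairing f x k := (intCast_dualPairing_apply f x k).symm

lemma gfToCoker_mk_eq_zero_iff_mem_radSub [Module.Free ℤ H] [Module.Finite ℤ H]
    (hf : ∀ x y, f x y = f y x) (x : dualLattice f) :
    gfToCoker f (QuotientAddGroup.mk x) = 0 ↔ x ∈ radSub f := by
  rw [gfToCoker_mk_eq_zero_iff]
  exact ⟨fun ⟨h, hh⟩ => mem_radSub_of_dualPairing_eq hf hh,
    exists_dualPairing_eq_of_mem_radSub hf⟩

end Radical

section Divisible

variable {H : Type} [AddCommGroup H] (f : H →ₗ[ℤ] H →ₗ[ℤ] ℤ)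

lemma exists_zsmul_eq_of_gfToCoker_eq_zero {g : Gf f} (hg : gfToCoker f g = 0) {n : ℤ}
    (hn : n ≠ 0) : ∃ g', gfToCoker f g' = 0 ∧ n • g' = g := by
  induction g using QuotientAddGroup.induction_on with
  | H x =>
  obtain ⟨h, hh⟩ := (gfToCoker_mk_eq_zero_iff f x).mp hg
  -- `x - h` is orthogonal to `H`, so all its rational multiples lie in `H^♯`.
  have hv (k : H) :
      fQ f ((n : ℚ)⁻¹ • ((x : ℚ ⊗[ℤ] H) - iotaQ H h)) (iotaQ H k) = (0 : H →ₗ[ℤ] ℤ) k := by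
    rw [map_smul, map_sub, LinearMap.smul_apply, LinearMap.sub_apply,
      ← intCast_dualPairing_apply, ← hh]
    simp
  let y : dualLattice f := ⟨_, mem_dualLattice_of_fQ_eq f 0 hv⟩
  refine ⟨QuotientAddGroup.mk y, ?_, ?_⟩
  · rw [gfToCoker_mk, (dualPairing_eq_iff f (x := y)).mpr hv, Submodule.Quotient.mk_zero]
  · change n • (QuotientAddGroup.mk y : dualLattice f ⧸ latInDual f) = QuotientAddGroup.mk x
    rw [← QuotientAddGroup.mk_zsmul, QuotientAddGroup.eq, mem_latInDual_iff]
    refine ⟨h, ?_⟩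
    rw [AddSubgroup.coe_add, AddSubgroup.coe_neg, AddSubgroup.coe_zsmul,
      ← Int.cast_smul_eq_zsmul ℚ, smul_inv_smul₀ (Int.cast_ne_zero.mpr hn)]
    abel

end Divisible

theorem stmt14 {H : Type} [AddCommGroup H] [Module.Free ℤ H] [Module.Finite ℤ H]
    (f : H →ₗ[ℤ] H →ₗ[ℤ] ℤ) (hf : ∀ x y, f x y = f y x) :
    ∃ ψ : Gf f →+ ((H →ₗ[ℤ] ℤ) ⧸ LinearMap.range f),
      (∀ (x : dualLattice f) (d : H →ₗ[ℤ] ℤ),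
        (∀ h : H, fQ f x (iotaQ H h) = (d h : ℚ)) →
        ψ (QuotientAddGroup.mk x) = Submodule.Quotient.mk d) ∧
      (∀ g : Gf f, ψ g ∈ Submodule.torsion ℤ ((H →ₗ[ℤ] ℤ) ⧸ LinearMap.range f)) ∧
      (∀ t ∈ Submodule.torsion ℤ ((H →ₗ[ℤ] ℤ) ⧸ LinearMap.range f), ∃ g : Gf f, ψ g = t) ∧
      (∀ x : dualLattice f, ψ (QuotientAddGroup.mk x) = 0 ↔ x ∈ radSub f) ∧
      (∃ s : (Submodule.torsion ℤ ((H →ₗ[ℤ] ℤ) ⧸ LinearMap.range f)) →+ Gf f,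
        ∀ t, ψ (s t) = (t : (H →ₗ[ℤ] ℤ) ⧸ LinearMap.range f)) := by
  let τ := (gfToCoker f).codRestrict _ (gfToCoker_mem_torsion f)
  have hτ_eq_zero {g : Gf f} : τ g = 0 ↔ gfToCoker f g = 0 := Subtype.ext_iff
  obtain ⟨s, hs⟩ := τ.exists_rightInverse_of_divisible_ker
    (fun t => (exists_gfToCoker_eq_of_mem_torsion f t.2).imp fun _ => Subtype.ext)
    fun g hg n hn => (exists_zsmul_eq_of_gfToCoker_eq_zero f (hτ_eq_zero.mp hg) hn).imp
      fun _ => And.imp_left hτ_eq_zero.mpr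
  refine ⟨gfToCoker f, fun x d hd => ?_, gfToCoker_mem_torsion f,
    fun t ht => exists_gfToCoker_eq_of_mem_torsion f ht,
    gfToCoker_mk_eq_zero_iff_mem_radSub hf, s, fun t => congrArg Subtype.val (hs t)⟩
  rw [gfToCoker_mk, (dualPairing_eq_iff f).mpr hd]
end
end

section
/- For a symmetric n×n integer matrix B, the set of characteristic solutions S = {r ∈ (ℤ/2)ⁿ : ∀i, Σ_j B_{ij} r_j ≡ B_{ii} mod 2} is nonempty, and it is a free transitive set under the action of the kernel of the mod-2 reduction of B acting by translation; more precisely, S is an affine subspace of (ℤ/2)ⁿ over Ker(B mod 2 : (ℤ/2)ⁿ → (ℤ/2)ⁿ). -/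
/-!
Over a ring of characteristic 2 the quadratic form `c ↦ c ⬝ᵥ A *ᵥ c` of a symmetric matrix `A` is
additive, since the cross terms `c ⬝ᵥ A *ᵥ d` and `d ⬝ᵥ A *ᵥ c` coincide; hence it equals
`∑ i, A i i * c i ^ 2`, which over `ZMod 2` is `A.diag ⬝ᵥ c`. So the diagonal is orthogonal to
`ker A = ker Aᵀ`, which over a field means it lies in the range of `A`. The solution set of
`A *ᵥ r = A.diag` is then a coset of `ker A`.
-/

open Matrix

section CharTwo

variable {ι R : Type*} [Fintype ι] [CommRing R] [CharP R 2] {A : Matrix ι ι R}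

theorem Matrix.IsSymm.dotProduct_mulVec_add (hA : A.IsSymm) (c d : ι → R) :
    (c + d) ⬝ᵥ A *ᵥ (c + d) = c ⬝ᵥ A *ᵥ c + d ⬝ᵥ A *ᵥ d := by
  have hcross : d ⬝ᵥ A *ᵥ c = c ⬝ᵥ A *ᵥ d := by
    rw [dotProduct_mulVec, ← mulVec_transpose, hA.eq, dotProduct_comm]
  rw [mulVec_add, dotProduct_add, add_dotProduct, add_dotProduct, hcross]
  linear_combination (norm := ring_nf) CharTwo.add_self_eq_zero (c ⬝ᵥ A *ᵥ d)

theorem Matrix.IsSymm.dotProduct_mulVec_self [DecidableEq ι] (hA : A.IsSymm) (c : ι → R) :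
    c ⬝ᵥ A *ᵥ c = ∑ i, A i i * c i ^ 2 := by
  let q : (ι → R) →+ R := AddMonoidHom.mk' (fun c => c ⬝ᵥ A *ᵥ c) hA.dotProduct_mulVec_add
  calc c ⬝ᵥ A *ᵥ c = q (∑ i, Pi.single i (c i)) := by rw [Finset.univ_sum_single]; rfl
    _ = ∑ i, A i i * c i ^ 2 := by
      rw [map_sum]
      refine Finset.sum_congr rfl fun i _ => ?_
      simp only [q, AddMonoidHom.mk'_apply, mulVec_single, op_smul_eq_smul, dotProduct_smul,
        single_dotProduct, col_apply, smul_eq_mul]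
      ring

end CharTwo

theorem Matrix.mem_range_mulVecLin_of_forall_vecMul_eq_zero {K m n : Type*} [Field K]
    [Fintype m] [Fintype n] [DecidableEq m] (A : Matrix m n K) {v : m → K}
    (hv : ∀ c, c ᵥ* A = 0 → v ⬝ᵥ c = 0) : v ∈ LinearMap.range A.mulVecLin := by
  rw [← Subspace.forall_mem_dualAnnihilator_apply_eq_zero_iff]
  intro φ hφ
  obtain ⟨c, rfl⟩ := (dotProductEquiv K m).surjective φ
  have hc : c ᵥ* A = 0 := dotProduct_eq_zero _ fun w => by
    rw [← dotProduct_mulVec]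
    exact (Submodule.mem_dualAnnihilator _).1 hφ _ ⟨w, rfl⟩
  simpa [dotProduct_comm] using hv c hc

theorem Matrix.IsSymm.diag_mem_range_mulVecLin {ι : Type*} [Fintype ι] [DecidableEq ι]
    {A : Matrix ι ι (ZMod 2)} (hA : A.IsSymm) : A.diag ∈ LinearMap.range A.mulVecLin := by
  refine A.mem_range_mulVecLin_of_forall_vecMul_eq_zero fun c hc => ?_
  have hker : A *ᵥ c = 0 := by rw [← hA.eq, mulVec_transpose, hc]
  calc A.diag ⬝ᵥ c = ∑ i, A i i * c i ^ 2 := by simp [dotProduct, ZMod.pow_card]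
    _ = 0 := by rw [← hA.dotProduct_mulVec_self, hker, dotProduct_zero]

theorem stmt17 (n : ℕ) (B : Matrix (Fin n) (Fin n) ℤ) (hB : B.IsSymm) :
    {r : Fin n → ZMod 2 |
        (B.map (Int.cast : ℤ → ZMod 2)).mulVec r = fun i => ((B i i : ZMod 2))}.Nonempty ∧
    ∀ r ∈ {r : Fin n → ZMod 2 |
        (B.map (Int.cast : ℤ → ZMod 2)).mulVec r = fun i => ((B i i : ZMod 2))},
      ∀ r' : Fin n → ZMod 2,
        (r' ∈ {r : Fin n → ZMod 2 |
            (B.map (Int.cast : ℤ → ZMod 2)).mulVec r = fun i => ((B i i : ZMod 2))} ↔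
          r' - r ∈ LinearMap.ker (Matrix.mulVecLin (B.map (Int.cast : ℤ → ZMod 2)))) := by
  refine ⟨?_, fun r hr r' => ?_⟩
  · obtain ⟨r, hr⟩ := (hB.map (Int.cast : ℤ → ZMod 2)).diag_mem_range_mulVecLin
    exact ⟨r, hr⟩
  · rw [Set.mem_ofPred_eq] at hr
    rw [Set.mem_ofPred_eq, LinearMap.mem_ker, mulVecLin_apply, mulVec_sub, hr, sub_eq_zero]
end
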